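/- Positive identity principle: for every positive proposition A⁺ and context Γ, the inversion sequent Γ ; A⁺ ⊢ A⁺ is derivable in the focused sequent calculus for polarized intuitionistic logic. -/

import Mathlib

namespace StructuralFocalization

/- Polarized propositional intuitionistic logic -/
mutual
inductive PProp : Type
  | atom : Nat → PProp
  | down : NProp → PProp
  | bot  : PProp
  | or   : PProp → PProp → PProp
  | top  : PProp
  | and  : PProp → PProp → PProp
inductive NProp : Type
  | atom : Nat → NProp
  | up   : PProp → NProp
  | imp  : PProp → NProp → NProp
  | top  : NProp
  | and  : NProp → NProp → NProp
end

/- Hypotheses: negative propositions or suspended positives ⟨A⁺⟩ -/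
inductive Hyp : Type
  | neg  : NProp → Hyp
  | susp : PProp → Hyp

/- Succedents: A⁺, A⁻, or suspended ⟨A⁻⟩ -/
inductive Succ : Type
  | pos  : PProp → Succ
  | neg  : NProp → Succ
  | susp : NProp → Succ

abbrev Ctx := List Hyp

def Succ.stable : Succ → Prop
  | .pos _ => True
  | .susp _ => True
  | .neg _ => False

def Hyp.suspNormal : Hyp → Prop
  | .susp (PProp.atom _) => True
  | .susp _ => False
  | .neg _ => True

def Ctx.suspNormal (Γ : Ctx) : Prop := ∀ h ∈ Γ, h.suspNormal

def Succ.suspNormal : Succ → Prop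
  | .susp (NProp.atom _) => True
  | .susp _ => False
  | _ => True

/- The focused sequent calculus (Figures 3 and 4 of "Structural focalization",
   with the generalized id⁺/id⁻ rules for arbitrary suspended propositions). -/
mutual
/-- Right focus: Γ ⊢ [A⁺] -/
inductive RFoc : Ctx → PProp → Prop
  | idP {Γ A} : Hyp.susp A ∈ Γ → RFoc Γ A
  | downR {Γ A} : Inv Γ [] (Succ.neg A) → RFoc Γ (PProp.down A)
  | orR1 {Γ A B} : RFoc Γ A → RFoc Γ (PProp.or A B)
  | orR2 {Γ A B} : RFoc Γ B → RFoc Γ (PProp.or A B)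
  | topR {Γ} : RFoc Γ PProp.top
  | andR {Γ A B} : RFoc Γ A → RFoc Γ B → RFoc Γ (PProp.and A B)
/-- Inversion: Γ ; Ω ⊢ U -/
inductive Inv : Ctx → List PProp → Succ → Prop
  | focR {Γ A} : RFoc Γ A → Inv Γ [] (Succ.pos A)
  | focL {Γ A U} : Hyp.neg A ∈ Γ → Succ.stable U → LFoc Γ A U → Inv Γ [] U
  | etaP {Γ p Ω U} : Inv (Hyp.susp (PProp.atom p) :: Γ) Ω U → Inv Γ (PProp.atom p :: Ω) U
  | downL {Γ A Ω U} : Inv (Hyp.neg A :: Γ) Ω U → Inv Γ (PProp.down A :: Ω) U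
  | botL {Γ Ω U} : Inv Γ (PProp.bot :: Ω) U
  | orL {Γ A B Ω U} : Inv Γ (A :: Ω) U → Inv Γ (B :: Ω) U → Inv Γ (PProp.or A B :: Ω) U
  | topPL {Γ Ω U} : Inv Γ Ω U → Inv Γ (PProp.top :: Ω) U
  | andPL {Γ A B Ω U} : Inv Γ (A :: B :: Ω) U → Inv Γ (PProp.and A B :: Ω) U
  | etaN {Γ p} : Inv Γ [] (Succ.susp (NProp.atom p)) → Inv Γ [] (Succ.neg (NProp.atom p))
  | upR {Γ A} : Inv Γ [] (Succ.pos A) → Inv Γ [] (Succ.neg (NProp.up A))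
  | impR {Γ A B} : Inv Γ [A] (Succ.neg B) → Inv Γ [] (Succ.neg (NProp.imp A B))
  | topNR {Γ} : Inv Γ [] (Succ.neg NProp.top)
  | andNR {Γ A B} : Inv Γ [] (Succ.neg A) → Inv Γ [] (Succ.neg B) →
      Inv Γ [] (Succ.neg (NProp.and A B))
/-- Left focus: Γ ; [A⁻] ⊢ U -/
inductive LFoc : Ctx → NProp → Succ → Prop
  | idN {Γ A} : LFoc Γ A (Succ.susp A)
  | upL {Γ A U} : Inv Γ [A] U → LFoc Γ (NProp.up A) U
  | impL {Γ A B U} : RFoc Γ A → LFoc Γ B U → LFoc Γ (NProp.imp A B) U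
  | andL1 {Γ A B U} : LFoc Γ A U → LFoc Γ (NProp.and A B) U
  | andL2 {Γ A B U} : LFoc Γ B U → LFoc Γ (NProp.and A B) U
end

/- Unpolarized propositions and Kleene's G3 -/
inductive UProp : Type
  | atom : Nat → UProp
  | bot  : UProp
  | or   : UProp → UProp → UProp
  | top  : UProp
  | and  : UProp → UProp → UProp
  | imp  : UProp → UProp → UProp

inductive G3 : List UProp → UProp → Prop
  | init {Γ p} : UProp.atom p ∈ Γ → G3 Γ (UProp.atom p)
  | botL {Γ Q} : UProp.bot ∈ Γ → G3 Γ Q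
  | orR1 {Γ A B} : G3 Γ A → G3 Γ (UProp.or A B)
  | orR2 {Γ A B} : G3 Γ B → G3 Γ (UProp.or A B)
  | orL {Γ A B Q} : UProp.or A B ∈ Γ → G3 (A :: Γ) Q → G3 (B :: Γ) Q → G3 Γ Q
  | topR {Γ} : G3 Γ UProp.top
  | andR {Γ A B} : G3 Γ A → G3 Γ B → G3 Γ (UProp.and A B)
  | andL1 {Γ A B Q} : UProp.and A B ∈ Γ → G3 (A :: Γ) Q → G3 Γ Q
  | andL2 {Γ A B Q} : UProp.and A B ∈ Γ → G3 (B :: Γ) Q → G3 Γ Q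
  | impR {Γ A B} : G3 (A :: Γ) B → G3 Γ (UProp.imp A B)
  | impL {Γ A B Q} : UProp.imp A B ∈ Γ → G3 Γ A → G3 (B :: Γ) Q → G3 Γ Q

/-- G3 with an ordered auxiliary context Ψ: Γ; Ψ ⊢ Q -/
inductive G3Psi : List UProp → List UProp → UProp → Prop
  | cons {Γ P Ψ Q} : G3Psi (P :: Γ) Ψ Q → G3Psi Γ (P :: Ψ) Q
  | nil {Γ Q} : G3 Γ Q → G3Psi Γ [] Q

/- Erasure -/
mutual
def eraseP : PProp → UProp
  | .atom p => .atom p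
  | .down A => eraseN A
  | .bot => .bot
  | .or A B => .or (eraseP A) (eraseP B)
  | .top => .top
  | .and A B => .and (eraseP A) (eraseP B)
def eraseN : NProp → UProp
  | .atom p => .atom p
  | .up A => eraseP A
  | .imp A B => .imp (eraseP A) (eraseN B)
  | .top => .top
  | .and A B => .and (eraseN A) (eraseN B)
end

def eraseHyp : Hyp → UProp
  | .neg A => eraseN A
  | .susp A => eraseP A

def eraseCtx (Γ : Ctx) : List UProp := Γ.map eraseHyp

def eraseSucc : Succ → UProp
  | .pos A => eraseP A
  | .neg A => eraseN A
  | .susp A => eraseN A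

/-! Identity expansion by mutual induction on the proposition, stated so that no focal
substitution is needed: in place of a suspended hypothesis ⟨A⁺⟩ the premise is a continuation
that may use a right-focus proof of A⁺ in any extension of the context (dually, for A⁻, any
left focus on A⁻ with a stable succedent). The invertible rules take A⁺ apart and the
continuation receives the focus proof reassembled from its components; the only structural
fact needed is weakening, to carry the focus proof of a first conjunct (or of an antecedent)
into the context grown while expanding the rest. -/

mutual
theorem RFoc.weaken {Γ Δ : Ctx} {A : PProp} (h : RFoc Γ A) (hΓ : Γ ⊆ Δ) : RFoc Δ A :=
  match h with
  | .idP hA => .idP (hΓ hA)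
  | .downR h => .downR (h.weaken hΓ)
  | .orR1 h => .orR1 (h.weaken hΓ)
  | .orR2 h => .orR2 (h.weaken hΓ)
  | .topR => .topR
  | .andR hA hB => .andR (hA.weaken hΓ) (hB.weaken hΓ)

theorem Inv.weaken {Γ Δ : Ctx} {Ω : List PProp} {U : Succ} (h : Inv Γ Ω U) (hΓ : Γ ⊆ Δ) :
    Inv Δ Ω U :=
  match h with
  | .focR h => .focR (h.weaken hΓ)
  | .focL hA hU h => .focL (hΓ hA) hU (h.weaken hΓ)
  | .etaP h => .etaP (h.weaken (List.cons_subset_cons _ hΓ))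
  | .downL h => .downL (h.weaken (List.cons_subset_cons _ hΓ))
  | .botL => .botL
  | .orL hA hB => .orL (hA.weaken hΓ) (hB.weaken hΓ)
  | .topPL h => .topPL (h.weaken hΓ)
  | .andPL h => .andPL (h.weaken hΓ)
  | .etaN h => .etaN (h.weaken hΓ)
  | .upR h => .upR (h.weaken hΓ)
  | .impR h => .impR (h.weaken hΓ)
  | .topNR => .topNR
  | .andNR hA hB => .andNR (hA.weaken hΓ) (hB.weaken hΓ)

theorem LFoc.weaken {Γ Δ : Ctx} {A : NProp} {U : Succ} (h : LFoc Γ A U) (hΓ : Γ ⊆ Δ) :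
    LFoc Δ A U :=
  match h with
  | .idN => .idN
  | .upL h => .upL (h.weaken hΓ)
  | .impL hA hB => .impL (hA.weaken hΓ) (hB.weaken hΓ)
  | .andL1 h => .andL1 (h.weaken hΓ)
  | .andL2 h => .andL2 (h.weaken hΓ)
end

mutual
theorem Inv.expand_pos (A : PProp) {Γ : Ctx} {Ω : List PProp} {U : Succ}
    (k : ∀ Δ, Γ ⊆ Δ → RFoc Δ A → Inv Δ Ω U) : Inv Γ (A :: Ω) U :=
  match A with
  | .atom _ => .etaP (k _ (List.subset_cons_self _ _) (.idP List.mem_cons_self))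
  | .down N =>
    .downL (k _ (List.subset_cons_self _ _) (.downR (Inv.expand_neg N
      fun _ hΔ _ hU hN => .focL (hΔ List.mem_cons_self) hU hN)))
  | .bot => .botL
  | .or A B =>
    .orL (Inv.expand_pos A fun Δ hΔ hA => k Δ hΔ (.orR1 hA))
      (Inv.expand_pos B fun Δ hΔ hB => k Δ hΔ (.orR2 hB))
  | .top => .topPL (k Γ (List.Subset.refl _) .topR)
  | .and A B =>
    .andPL (Inv.expand_pos A fun _ hΔ hA => Inv.expand_pos B fun Δ' hΔ' hB =>
      k Δ' (List.Subset.trans hΔ hΔ') (.andR (hA.weaken hΔ') hB))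

theorem Inv.expand_neg (N : NProp) {Γ : Ctx}
    (k : ∀ Δ, Γ ⊆ Δ → ∀ U, U.stable → LFoc Δ N U → Inv Δ [] U) : Inv Γ [] (.neg N) :=
  match N with
  | .atom _ => .etaN (k Γ (List.Subset.refl _) _ trivial .idN)
  | .up A =>
    .upR (k Γ (List.Subset.refl _) _ trivial
      (.upL (Inv.expand_pos A fun _ _ hA => .focR hA)))
  | .imp A B =>
    .impR (Inv.expand_pos A fun _ hΔ hA => Inv.expand_neg B fun Δ' hΔ' U hU hB =>
      k Δ' (List.Subset.trans hΔ hΔ') U hU (.impL (hA.weaken hΔ') hB))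
  | .top => .topNR
  | .and A B =>
    .andNR (Inv.expand_neg A fun Δ hΔ U hU hA => k Δ hΔ U hU (.andL1 hA))
      (Inv.expand_neg B fun Δ hΔ U hU hB => k Δ hΔ U hU (.andL2 hB))
end

/-- Positive identity principle. -/
theorem positive_identity :
    ∀ (A : PProp) (Γ : Ctx), Inv Γ [A] (Succ.pos A) :=
  fun A _ => Inv.expand_pos A fun _ _ hA => .focR hA

end StructuralFocalization
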